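/- arXiv:2210.06741 — 6 statements merged into one kernel-verified Lean document; each statement's English description precedes it below -/
import Mathlib

section
/- Let f : ℝ^{d×n} → ℝ^d satisfy f(QX) = Q f(X) for every orthogonal matrix Q ∈ ℝ^{d×d} and every X ∈ ℝ^{d×n}. Then for every X, the vector f(X) lies in the span of the columns of X. -/
/-!
Let `R` be the orthogonal reflection in the column span `W` of `X`. Since `R` fixes every column,
`R X = X`, so equivariance gives `f X = f (R X) = R (f X)`; and the fixed vectors of a reflection
are exactly the vectors of the subspace it reflects in.
-/

open Matrix

namespace Submodule

variable {ι : Type*} [Fintype ι] [DecidableEq ι] (W : Submodule ℝ (ι → ℝ))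

abbrev toEuclidean : Submodule ℝ (EuclideanSpace ℝ ι) :=
  W.comap (WithLp.linearEquiv 2 ℝ (ι → ℝ)).toLinearMap

noncomputable def reflectionMatrix : Matrix ι ι ℝ :=
  toEuclideanLin.symm W.toEuclidean.reflection.toLinearMap

theorem reflectionMatrix_mulVec (v : ι → ℝ) :
    W.reflectionMatrix *ᵥ v = WithLp.ofLp (W.toEuclidean.reflection (WithLp.toLp 2 v)) := by
  have h : toEuclideanLin W.reflectionMatrix = W.toEuclidean.reflection.toLinearMap :=
    LinearEquiv.apply_symm_apply _ _
  exact congrArg WithLp.ofLp (LinearMap.congr_fun h (WithLp.toLp 2 v))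

theorem reflectionMatrix_transpose_mul_self : W.reflectionMatrixᵀ * W.reflectionMatrix = 1 := by
  rw [← mem_orthogonalGroup_iff']
  exact W.toEuclidean.reflection.toMatrix_mem_unitaryGroup (EuclideanSpace.basisFun ι ℝ)
    (EuclideanSpace.basisFun ι ℝ)

theorem reflectionMatrix_mulVec_eq_self_iff {v : ι → ℝ} :
    W.reflectionMatrix *ᵥ v = v ↔ v ∈ W := by
  rw [reflectionMatrix_mulVec, ← (WithLp.toLp_injective 2).eq_iff, WithLp.toLp_ofLp,
    reflection_eq_self_iff]
  rfl

theorem reflectionMatrix_mul_eq_self {κ : Type*} {X : Matrix ι κ ℝ} (hX : ∀ j, Xᵀ j ∈ W) :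
    W.reflectionMatrix * X = X := by
  ext i j
  exact congrFun (W.reflectionMatrix_mulVec_eq_self_iff.mpr (hX j)) i

end Submodule

theorem orth_equivariant_output_in_column_span_general (d n : ℕ)
    (f : Matrix (Fin d) (Fin n) ℝ → (Fin d → ℝ))
    (hf : ∀ (Q : Matrix (Fin d) (Fin d) ℝ) (X : Matrix (Fin d) (Fin n) ℝ),
      Qᵀ * Q = 1 → f (Q * X) = Q.mulVec (f X)) :
    ∀ X : Matrix (Fin d) (Fin n) ℝ,
      f X ∈ Submodule.span ℝ (Set.range fun j : Fin n => (fun i : Fin d => X i j)) := by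
  intro X
  set W := Submodule.span ℝ (Set.range fun j : Fin n => (fun i : Fin d => X i j))
  have hRX : W.reflectionMatrix * X = X :=
    W.reflectionMatrix_mul_eq_self fun j => Submodule.subset_span ⟨j, rfl⟩
  have hfX := hf W.reflectionMatrix X W.reflectionMatrix_transpose_mul_self
  rw [hRX] at hfX
  exact W.reflectionMatrix_mulVec_eq_self_iff.mp hfX.symm

/-- If `f : ℝ^{d×n} → ℝ^d` satisfies `f(QX) = Q f(X)` for every orthogonal `Q`,
then `f(X)` lies in the span of the columns of `X`. -/
theorem orth_equivariant_output_in_column_span (d n : ℕ) (hd : 0 < d) (hn : 0 < n)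
    (f : Matrix (Fin d) (Fin n) ℝ → (Fin d → ℝ))
    (hf : ∀ (Q : Matrix (Fin d) (Fin d) ℝ) (X : Matrix (Fin d) (Fin n) ℝ),
      Qᵀ * Q = 1 → f (Q * X) = Q.mulVec (f X)) :
    ∀ X : Matrix (Fin d) (Fin n) ℝ,
      f X ∈ Submodule.span ℝ (Set.range fun j : Fin n => (fun i : Fin d => X i j)) :=
  orth_equivariant_output_in_column_span_general d n f hf
end

section
/- Let f : ℝ^{d×n} → ℝ^{d×m} satisfy f(QX) = Q f(X) for every orthogonal Q ∈ ℝ^{d×d}. Then every column of f(X) lies in the column span of X, i.e. there exists a matrix c(X) ∈ ℝ^{n×m} with f(X) = X · c(X). -/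
/-!
The orthogonal reflection `Q` of `ℝ^d` in the column span of `X` fixes `X`, so equivariance
gives `f X = f (Q X) = Q (f X)`. The vectors fixed by a reflection are exactly those of the
reflecting subspace, hence every column of `f X` lies in the column span of `X`.
-/

open Matrix

theorem LinearMap.exists_comp_eq_of_range_le {R P M N : Type*} [Semiring R]
    [AddCommMonoid P] [Module R P] [AddCommMonoid M] [Module R M] [AddCommMonoid N] [Module R N]
    [Module.Projective R P] {f : M →ₗ[R] N} {g : P →ₗ[R] N} (h : range g ≤ range f) :
    ∃ l : P →ₗ[R] M, f ∘ₗ l = g := by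
  obtain ⟨l, hl⟩ := Module.projective_lifting_property f.rangeRestrict
    (g.codRestrict (range f) fun x => h (mem_range_self g x)) f.surjective_rangeRestrict
  exact ⟨l, LinearMap.ext fun x => congrArg Subtype.val (LinearMap.congr_fun hl x)⟩

theorem Matrix.exists_eq_mul_of_range_toLin_le {R M₁ M₂ M₃ k l m : Type*} [CommSemiring R]
    [AddCommMonoid M₁] [Module R M₁] [AddCommMonoid M₂] [Module R M₂]
    [AddCommMonoid M₃] [Module R M₃]
    [Fintype k] [DecidableEq k] [Fintype l] [DecidableEq l] [Fintype m] [DecidableEq m]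
    (b₁ : Module.Basis k R M₁) (b₂ : Module.Basis l R M₂) (b₃ : Module.Basis m R M₃)
    {X : Matrix l k R} {Y : Matrix l m R}
    (h : LinearMap.range (toLin b₃ b₂ Y) ≤ LinearMap.range (toLin b₁ b₂ X)) :
    ∃ c : Matrix k m R, Y = X * c := by
  have := Module.Projective.of_basis b₃
  obtain ⟨g, hg⟩ := LinearMap.exists_comp_eq_of_range_le h
  refine ⟨LinearMap.toMatrix b₃ b₁ g, (toLin b₃ b₂).injective ?_⟩
  rw [toLin_mul b₃ b₁ b₂, toLin_toMatrix, hg]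

section reflectionMatrix

variable {ι : Type*} [Fintype ι] [DecidableEq ι] (K : Submodule ℝ (EuclideanSpace ℝ ι))

noncomputable def reflectionMatrix : Matrix ι ι ℝ :=
  toEuclideanLin.symm K.reflection.toLinearEquiv

theorem reflectionMatrix_mem_orthogonalGroup : reflectionMatrix K ∈ orthogonalGroup ι ℝ := by
  have := K.reflection.toMatrix_mem_unitaryGroup (EuclideanSpace.basisFun ι ℝ)
    (EuclideanSpace.basisFun ι ℝ)
  rwa [← toLin_symm, ← toEuclideanLin_eq_toLin_orthonormal] at this

theorem toEuclideanLin_reflectionMatrix :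
    toEuclideanLin (reflectionMatrix K) = K.reflection.toLinearEquiv.toLinearMap :=
  LinearEquiv.apply_symm_apply _ _

theorem reflectionMatrix_mul_eq_self_iff {κ : Type*} [Fintype κ] [DecidableEq κ]
    {Y : Matrix ι κ ℝ} :
    reflectionMatrix K * Y = Y ↔ LinearMap.range (toEuclideanLin Y) ≤ K := by
  rw [← toEuclideanLin.injective.eq_iff, toLpLin_mul_same, toEuclideanLin_reflectionMatrix,
    LinearMap.ext_iff, LinearMap.range_le_iff_comap, Submodule.eq_top_iff']
  simp only [LinearMap.comp_apply, LinearEquiv.coe_coe, LinearIsometryEquiv.coe_toLinearEquiv,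
    Submodule.mem_comap, Submodule.reflection_eq_self_iff]

end reflectionMatrix

theorem orth_equivariant_factor_general (d n m : ℕ)
    (f : Matrix (Fin d) (Fin n) ℝ → Matrix (Fin d) (Fin m) ℝ)
    (hf : ∀ (Q : Matrix (Fin d) (Fin d) ℝ) (X : Matrix (Fin d) (Fin n) ℝ),
      Qᵀ * Q = 1 → f (Q * X) = Q * f X) :
    ∀ X : Matrix (Fin d) (Fin n) ℝ, ∃ c : Matrix (Fin n) (Fin m) ℝ, f X = X * c := by
  intro X
  let K := LinearMap.range (toEuclideanLin X)
  have hQ := (mem_orthogonalGroup_iff' _ _).1 (reflectionMatrix_mem_orthogonalGroup K)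
  have hQX : reflectionMatrix K * X = X := (reflectionMatrix_mul_eq_self_iff K).2 le_rfl
  have hQfX : reflectionMatrix K * f X = f X := by rw [← hf _ X hQ, hQX]
  exact exists_eq_mul_of_range_toLin_le (EuclideanSpace.basisFun _ ℝ).toBasis
    (EuclideanSpace.basisFun _ ℝ).toBasis (EuclideanSpace.basisFun _ ℝ).toBasis
    ((reflectionMatrix_mul_eq_self_iff K).1 hQfX)

/-- If `f : ℝ^{d×n} → ℝ^{d×m}` is orthogonal equivariant, then every column of
`f(X)` lies in the column span of `X`: there is `c(X) ∈ ℝ^{n×m}` with `f(X) = X c(X)`. -/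
theorem orth_equivariant_factor (d n m : ℕ) (hd : 0 < d) (hn : 0 < n) (hm : 0 < m)
    (f : Matrix (Fin d) (Fin n) ℝ → Matrix (Fin d) (Fin m) ℝ)
    (hf : ∀ (Q : Matrix (Fin d) (Fin d) ℝ) (X : Matrix (Fin d) (Fin n) ℝ),
      Qᵀ * Q = 1 → f (Q * X) = Q * f X) :
    ∀ X : Matrix (Fin d) (Fin n) ℝ, ∃ c : Matrix (Fin n) (Fin m) ℝ, f X = X * c :=
  orth_equivariant_factor_general d n m f hf
end

section
/- Let X, Y ∈ ℝ^{d×n} satisfy XᵀX = YᵀY. Then there exists an orthogonal matrix Q ∈ ℝ^{d×d} with Y = QX. -/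
/-!
The Gram matrix `XᵀX` records all inner products `⟪X v, X w⟫`, so `XᵀX = YᵀY` says that
`X v ↦ Y v` is a well-defined linear isometry from the column space of `X` into `ℝᵈ`. Every linear
isometry from a subspace of a finite-dimensional inner product space into that space extends to
an isometry of the whole space, and the matrix `Q` of that extension is orthogonal with `QX = Y`.
-/

open Matrix

theorem LinearMap.exists_comp_rangeRestrict_eq_of_ker_le {R M N P : Type*} [Ring R]
    [AddCommGroup M] [AddCommGroup N] [AddCommGroup P] [Module R M] [Module R N] [Module R P]
    {A : M →ₗ[R] N} {B : M →ₗ[R] P} (h : ker A ≤ ker B) :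
    ∃ f : range A →ₗ[R] P, f ∘ₗ A.rangeRestrict = B :=
  ⟨(ker A).liftQ B h ∘ₗ A.quotKerEquivRange.symm.toLinearMap, by
    ext v
    have hv : A.quotKerEquivRange.symm (A.rangeRestrict v) = (ker A).mkQ v :=
      A.quotKerEquivRange.symm_apply_eq.mpr rfl
    simp [hv]⟩

theorem LinearMap.exists_linearIsometry_comp_eq {𝕜 V W : Type*} [RCLike 𝕜]
    [NormedAddCommGroup V] [InnerProductSpace 𝕜 V]
    [NormedAddCommGroup W] [InnerProductSpace 𝕜 W] [FiniteDimensional 𝕜 W]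
    (A B : V →ₗ[𝕜] W) (h : ∀ v, ‖A v‖ = ‖B v‖) :
    ∃ L : W →ₗᵢ[𝕜] W, L.toLinearMap ∘ₗ A = B := by
  have hker : ker A ≤ ker B := fun v hv => by
    rw [mem_ker, ← norm_eq_zero, ← h, mem_ker.mp hv, norm_zero]
  obtain ⟨f, hf⟩ := exists_comp_rangeRestrict_eq_of_ker_le hker
  have hf_norm : ∀ x, ‖f x‖ = ‖x‖ := by
    intro x
    obtain ⟨v, rfl⟩ := A.surjective_rangeRestrict x
    rw [show f (A.rangeRestrict v) = B v from congr($hf v)]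
    exact (h v).symm
  refine ⟨LinearIsometry.extend ⟨f, hf_norm⟩, ext fun v => ?_⟩
  exact (LinearIsometry.extend_apply _ (A.rangeRestrict v)).trans congr($hf v)

namespace Matrix

variable {𝕜 m n : Type*} [RCLike 𝕜] [Fintype m] [DecidableEq m] [Fintype n] [DecidableEq n]

theorem inner_toEuclideanLin_toEuclideanLin (X : Matrix m n 𝕜) (v w : EuclideanSpace 𝕜 n) :
    inner 𝕜 (X.toEuclideanLin v) (X.toEuclideanLin w) = inner 𝕜 v ((Xᴴ * X).toEuclideanLin w) := by
  rw [toLpLin_mul_same, toEuclideanLin_conjTranspose_eq_adjoint, LinearMap.comp_apply,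
    LinearMap.adjoint_inner_right]

theorem norm_toEuclideanLin_eq_of_conjTranspose_mul_self_eq {X Y : Matrix m n 𝕜}
    (h : Xᴴ * X = Yᴴ * Y) (v : EuclideanSpace 𝕜 n) :
    ‖X.toEuclideanLin v‖ = ‖Y.toEuclideanLin v‖ := by
  rw [norm_eq_sqrt_re_inner (𝕜 := 𝕜), norm_eq_sqrt_re_inner (𝕜 := 𝕜),
    inner_toEuclideanLin_toEuclideanLin, inner_toEuclideanLin_toEuclideanLin, h]

theorem conjTranspose_mul_self_eq_one_of_norm_toEuclideanLin {Q : Matrix n n 𝕜}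
    (hQ : ∀ v, ‖Q.toEuclideanLin v‖ = ‖v‖) : Qᴴ * Q = 1 := by
  apply toEuclideanLin.injective
  rw [toLpLin_mul_same, toEuclideanLin_conjTranspose_eq_adjoint, toLpLin_one]
  exact LinearIsometry.adjoint_comp_self' ⟨Q.toEuclideanLin, hQ⟩

end Matrix

theorem gram_eq_implies_orth_related_general (d n : ℕ)
    (X Y : Matrix (Fin d) (Fin n) ℝ) (h : Xᵀ * X = Yᵀ * Y) :
    ∃ Q : Matrix (Fin d) (Fin d) ℝ, Qᵀ * Q = 1 ∧ Y = Q * X := by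
  simp only [← conjTranspose_eq_transpose_of_trivial] at h ⊢
  obtain ⟨L, hL⟩ := X.toEuclideanLin.exists_linearIsometry_comp_eq Y.toEuclideanLin
    (norm_toEuclideanLin_eq_of_conjTranspose_mul_self_eq h)
  set Q := toEuclideanLin.symm L.toLinearMap
  have hQ : Q.toEuclideanLin = L.toLinearMap := toEuclideanLin.apply_symm_apply _
  refine ⟨Q, conjTranspose_mul_self_eq_one_of_norm_toEuclideanLin fun v => ?_,
    toEuclideanLin.injective ?_⟩
  · rw [hQ]
    exact L.norm_map v
  · rw [toLpLin_mul_same, hQ, hL]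

/-- If `XᵀX = YᵀY` then `Y = QX` for some orthogonal `Q`. -/
theorem gram_eq_implies_orth_related (d n : ℕ) (hd : 0 < d) (hn : 0 < n)
    (X Y : Matrix (Fin d) (Fin n) ℝ) (h : Xᵀ * X = Yᵀ * Y) :
    ∃ Q : Matrix (Fin d) (Fin d) ℝ, Qᵀ * Q = 1 ∧ Y = Q * X :=
  gram_eq_implies_orth_related_general d n X Y h
end

section
/- Let f : ℝ^{d×n} × ℝ^{d×k} → ℝ^{d×m} satisfy f(QX, QZ) = Q f(X, Z) for every orthogonal Q ∈ ℝ^{d×d}, all X ∈ ℝ^{d×n} and Z ∈ ℝ^{d×k}. Then there exist functions g₁ (into ℝ^{n×m}) and g₂ (into ℝ^{k×m}) of the triple (XᵀX, ZᵀX, ZᵀZ) such that f(X, Z) = X·g₁(XᵀX, ZᵀX, ZᵀZ) + Z·g₂(XᵀX, ZᵀX, ZᵀZ). -/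
/-!
If `Wᵀ W = W'ᵀ W'`, the columns of `W` and `W'` have the same Gram matrix, so `∑ cᵢ wᵢ ↦ ∑ cᵢ w'ᵢ`
is a well-defined isometry of the column spans; extending it gives an orthogonal `Q` with
`Q W = W'`. A vector fixed by every orthogonal map fixing the columns of `W` is fixed by the
reflection in their span, hence lies in it. So an orthogonally equivariant `f` has
`f W = W C(W)`, and transporting a fixed representative of each Gram class shows that `C` can be
taken to be a function of `Wᵀ W`. The two-input statement is this applied to `[X, Z]`, whose Gram
matrix has the blocks `XᵀX`, `XᵀZ`, `ZᵀX`, `ZᵀZ`.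
-/

open Matrix Module Submodule
open scoped InnerProductSpace

section InnerProductSpace

variable {𝕜 E ι : Type*} [RCLike 𝕜] [NormedAddCommGroup E] [InnerProductSpace 𝕜 E]

theorem inner_linearCombination_eq_of_gram_eq [Fintype ι] {v w : ι → E}
    (h : gram 𝕜 v = gram 𝕜 w) (c c' : ι → 𝕜) :
    ⟪Fintype.linearCombination 𝕜 v c, Fintype.linearCombination 𝕜 v c'⟫_𝕜 =
      ⟪Fintype.linearCombination 𝕜 w c, Fintype.linearCombination 𝕜 w c'⟫_𝕜 := by
  simp only [Fintype.linearCombination_apply, ← star_dotProduct_gram_mulVec, h]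

theorem ker_linearCombination_le_of_gram_eq [Fintype ι] {v w : ι → E}
    (h : gram 𝕜 v = gram 𝕜 w) :
    LinearMap.ker (Fintype.linearCombination 𝕜 v) ≤
      LinearMap.ker (Fintype.linearCombination 𝕜 w) := by
  intro c hc
  rw [LinearMap.mem_ker] at hc ⊢
  rw [← inner_self_eq_zero (𝕜 := 𝕜), ← inner_linearCombination_eq_of_gram_eq h, hc,
    inner_zero_left]

theorem exists_linearIsometryEquiv_comp_eq_of_gram_eq [FiniteDimensional 𝕜 E] [Fintype ι]
    {v w : ι → E} (h : gram 𝕜 v = gram 𝕜 w) : ∃ T : E ≃ₗᵢ[𝕜] E, ⇑T ∘ v = w := by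
  classical
  set S := Fintype.linearCombination 𝕜 v
  set S' := Fintype.linearCombination 𝕜 w
  let φ : LinearMap.range S →ₗ[𝕜] E :=
    (LinearMap.ker S).liftQ S' (ker_linearCombination_le_of_gram_eq h) ∘ₗ
      S.quotKerEquivRange.symm.toLinearMap
  have hφ (c : ι → 𝕜) : φ ⟨S c, LinearMap.mem_range_self S c⟩ = S' c := by
    simp [φ, S.quotKerEquivRange_symm_apply_image]
  have hφ_inner (x y : LinearMap.range S) : ⟪φ x, φ y⟫_𝕜 = ⟪x, y⟫_𝕜 := by
    obtain ⟨_, c, rfl⟩ := x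
    obtain ⟨_, c', rfl⟩ := y
    rw [hφ, hφ, coe_inner, inner_linearCombination_eq_of_gram_eq h]
  let L := φ.isometryOfInner hφ_inner
  refine ⟨L.extend.toLinearIsometryEquiv rfl, funext fun i => ?_⟩
  have hL := L.extend_apply ⟨_, LinearMap.mem_range_self S (Pi.single i 1)⟩
  simp only [L, LinearMap.coe_isometryOfInner, hφ] at hL
  simpa [S, S'] using hL

theorem mem_span_range_of_forall_linearIsometryEquiv [Finite ι] {v : ι → E} {x : E}
    (h : ∀ T : E ≃ₗᵢ[𝕜] E, (∀ i, T (v i) = v i) → T x = x) : x ∈ span 𝕜 (Set.range v) :=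
  have : FiniteDimensional 𝕜 (span 𝕜 (Set.range v)) := .span_of_finite 𝕜 (Set.finite_range v)
  (reflection_eq_self_iff x).mp <|
    h _ fun i => reflection_mem_subspace_eq_self (subset_span (Set.mem_range_self i))

end InnerProductSpace

namespace Matrix

variable {m ι κ : Type*}

def euclideanCols (W : Matrix m ι ℝ) (j : ι) : EuclideanSpace ℝ m := WithLp.toLp 2 (Wᵀ j)

theorem gram_euclideanCols [Fintype m] (W : Matrix m ι ℝ) :
    gram ℝ W.euclideanCols = Wᵀ * W := by
  ext i j
  simp [euclideanCols, gram_apply, mul_apply, PiLp.inner_apply, mul_comm]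

theorem euclideanCols_injective : Function.Injective (euclideanCols : Matrix m ι ℝ → _) :=
  fun W W' h => by
    ext i j
    simpa [euclideanCols] using congr($h j i)

theorem euclideanCols_mul [Fintype m] [DecidableEq m] (Q : Matrix m m ℝ) (W : Matrix m ι ℝ) :
    (Q * W).euclideanCols = toEuclideanLin Q ∘ W.euclideanCols := by
  ext j i
  simp [euclideanCols, mulVec, dotProduct, mul_apply, mul_comm]

theorem exists_orthogonal_toEuclideanLin_eq [Fintype m] [DecidableEq m]
    (T : EuclideanSpace ℝ m ≃ₗᵢ[ℝ] EuclideanSpace ℝ m) :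
    ∃ Q : Matrix m m ℝ, Qᵀ * Q = 1 ∧ toEuclideanLin Q = T.toLinearMap := by
  let b := (EuclideanSpace.basisFun m ℝ).toBasis
  refine ⟨LinearMap.toMatrix b b T.toLinearMap, ?_, toLin_toMatrix b b _⟩
  simpa [mem_unitaryGroup_iff', star_eq_conjTranspose] using
    T.toMatrix_mem_unitaryGroup (EuclideanSpace.basisFun m ℝ) (EuclideanSpace.basisFun m ℝ)

theorem exists_orthogonal_mul_eq_of_transpose_mul_self_eq [Fintype m]
    [DecidableEq m] [Fintype ι] {W W' : Matrix m ι ℝ} (h : Wᵀ * W = W'ᵀ * W') :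
    ∃ Q : Matrix m m ℝ, Qᵀ * Q = 1 ∧ Q * W = W' := by
  rw [← gram_euclideanCols, ← gram_euclideanCols] at h
  obtain ⟨T, hT⟩ := exists_linearIsometryEquiv_comp_eq_of_gram_eq h
  obtain ⟨Q, hQ, hQT⟩ := exists_orthogonal_toEuclideanLin_eq T
  exact ⟨Q, hQ, euclideanCols_injective (by rw [euclideanCols_mul, hQT]; exact hT)⟩

theorem exists_eq_mul_of_forall_orthogonal_mul_eq_self [Fintype m] [DecidableEq m] [Fintype ι]
    {W : Matrix m ι ℝ} {F : Matrix m κ ℝ}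
    (hF : ∀ Q : Matrix m m ℝ, Qᵀ * Q = 1 → Q * W = W → Q * F = F) :
    ∃ C : Matrix ι κ ℝ, F = W * C := by
  have hspan (j : κ) : F.euclideanCols j ∈ span ℝ (Set.range W.euclideanCols) := by
    refine mem_span_range_of_forall_linearIsometryEquiv fun T hT => ?_
    obtain ⟨Q, hQ, hQT⟩ := exists_orthogonal_toEuclideanLin_eq T
    have hQW : Q * W = W :=
      euclideanCols_injective (by rw [euclideanCols_mul, hQT]; exact funext hT)
    simpa [euclideanCols_mul, hQT] using congr(euclideanCols $(hF Q hQ hQW) j)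
  choose c hc using fun j => (mem_span_range_iff_exists_fun ℝ).mp (hspan j)
  refine ⟨of fun i j => c j i, ?_⟩
  ext a j
  simpa [euclideanCols, mul_apply, mul_comm] using congr(WithLp.ofLp $(hc j) a).symm

theorem exists_eq_mul_gram_of_orthogonal_equivariant [Fintype m] [DecidableEq m] [Fintype ι]
    (f : Matrix m ι ℝ → Matrix m κ ℝ)
    (hf : ∀ (Q : Matrix m m ℝ) (W : Matrix m ι ℝ), Qᵀ * Q = 1 → f (Q * W) = Q * f W) :
    ∃ g : Matrix ι ι ℝ → Matrix ι κ ℝ, ∀ W, f W = W * g (Wᵀ * W) := by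
  have hfactor (W : Matrix m ι ℝ) : ∃ C : Matrix ι κ ℝ, f W = W * C :=
    exists_eq_mul_of_forall_orthogonal_mul_eq_self fun Q hQ hQW => by rw [← hf Q W hQ, hQW]
  choose M hM using hfactor
  refine ⟨M ∘ Function.invFun fun V : Matrix m ι ℝ => Vᵀ * V, fun W => ?_⟩
  let W₀ := Function.invFun (fun V : Matrix m ι ℝ => Vᵀ * V) (Wᵀ * W)
  have hW₀ : W₀ᵀ * W₀ = Wᵀ * W :=
    Function.invFun_eq (f := fun V : Matrix m ι ℝ => Vᵀ * V) ⟨W, rfl⟩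
  obtain ⟨Q, hQ, hQW⟩ := exists_orthogonal_mul_eq_of_transpose_mul_self_eq hW₀
  calc f W = Q * f W₀ := by rw [← hQW, hf Q W₀ hQ]
    _ = W * M W₀ := by rw [hM, ← Matrix.mul_assoc, hQW]

end Matrix

theorem orth_equivariant_with_knowledge_representation_general (d n k m : ℕ)
    (f : Matrix (Fin d) (Fin n) ℝ → Matrix (Fin d) (Fin k) ℝ → Matrix (Fin d) (Fin m) ℝ)
    (hf : ∀ (Q : Matrix (Fin d) (Fin d) ℝ) (X : Matrix (Fin d) (Fin n) ℝ)
      (Z : Matrix (Fin d) (Fin k) ℝ), Qᵀ * Q = 1 → f (Q * X) (Q * Z) = Q * f X Z) :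
    ∃ (g₁ : Matrix (Fin n) (Fin n) ℝ → Matrix (Fin k) (Fin n) ℝ →
        Matrix (Fin k) (Fin k) ℝ → Matrix (Fin n) (Fin m) ℝ)
      (g₂ : Matrix (Fin n) (Fin n) ℝ → Matrix (Fin k) (Fin n) ℝ →
        Matrix (Fin k) (Fin k) ℝ → Matrix (Fin k) (Fin m) ℝ),
      ∀ (X : Matrix (Fin d) (Fin n) ℝ) (Z : Matrix (Fin d) (Fin k) ℝ),
        f X Z = X * g₁ (Xᵀ * X) (Zᵀ * X) (Zᵀ * Z) + Z * g₂ (Xᵀ * X) (Zᵀ * X) (Zᵀ * Z) := by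
  obtain ⟨g, hg⟩ := exists_eq_mul_gram_of_orthogonal_equivariant
    (fun W : Matrix (Fin d) (Fin n ⊕ Fin k) ℝ => f W.toCols₁ W.toCols₂)
    fun Q W hQ => hf Q W.toCols₁ W.toCols₂ hQ
  let G a b c := g (fromBlocks a bᵀ b c)
  refine ⟨fun a b c => (G a b c).toRows₁, fun a b c => (G a b c).toRows₂, fun X Z => ?_⟩
  have hgram : (fromCols X Z)ᵀ * fromCols X Z =
      fromBlocks (Xᵀ * X) (Zᵀ * X)ᵀ (Zᵀ * X) (Zᵀ * Z) := by
    simp [transpose_fromCols]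
  simpa [hgram, ← fromCols_mul_fromRows, G] using hg (fromCols X Z)

/-- Proposition 2: an orthogonal equivariant seq2seq function with knowledge,
`f(QX, QZ) = Q f(X, Z)`, can be written as
`f(X,Z) = X g₁(XᵀX, ZᵀX, ZᵀZ) + Z g₂(XᵀX, ZᵀX, ZᵀZ)`. -/
theorem orth_equivariant_with_knowledge_representation (d n k m : ℕ)
    (hd : 0 < d) (hn : 0 < n) (hk : 0 < k) (hm : 0 < m)
    (f : Matrix (Fin d) (Fin n) ℝ → Matrix (Fin d) (Fin k) ℝ → Matrix (Fin d) (Fin m) ℝ)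
    (hf : ∀ (Q : Matrix (Fin d) (Fin d) ℝ) (X : Matrix (Fin d) (Fin n) ℝ)
      (Z : Matrix (Fin d) (Fin k) ℝ), Qᵀ * Q = 1 → f (Q * X) (Q * Z) = Q * f X Z) :
    ∃ (g₁ : Matrix (Fin n) (Fin n) ℝ → Matrix (Fin k) (Fin n) ℝ →
        Matrix (Fin k) (Fin k) ℝ → Matrix (Fin n) (Fin m) ℝ)
      (g₂ : Matrix (Fin n) (Fin n) ℝ → Matrix (Fin k) (Fin n) ℝ →
        Matrix (Fin k) (Fin k) ℝ → Matrix (Fin k) (Fin m) ℝ),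
      ∀ (X : Matrix (Fin d) (Fin n) ℝ) (Z : Matrix (Fin d) (Fin k) ℝ),
        f X Z = X * g₁ (Xᵀ * X) (Zᵀ * X) (Zᵀ * Z) + Z * g₂ (Xᵀ * X) (Zᵀ * X) (Zᵀ * Z) :=
  orth_equivariant_with_knowledge_representation_general d n k m f hf
end

section
/- Let h : (ℝ^d)^m → ℝ be invariant under all permutations of its m arguments, where the arguments range over a countable set 𝒳 ⊆ ℝ^d. Then there exist functions ψ : 𝒳 → ℝ^M (for some M) and ρ : ℝ^M → ℝ such that h(x₁,…,x_m) = ρ(∑_{k=1}^m ψ(x_k)). -/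
/-!
Send the `n`-th point of the countable set `𝒳` to `log pₙ`, where `pₙ` is the `n`-th prime.
A sum of such codes is the logarithm of a product of primes, so by unique factorization it
determines the multiset of points, and a permutation invariant `h` depends only on that
multiset; `ρ` is then `h` read off on the image of the encoding.
-/

open Function

lemma Multiset.injOn_map {α β : Type*} {f : α → β} {S : Set α} (hf : S.InjOn f) :
    {s : Multiset α | ∀ a ∈ s, a ∈ S}.InjOn (Multiset.map f) := by
  intro s hs t ht hst
  lift s to Multiset S using hs
  lift t to Multiset S using ht
  simp only [Multiset.map_map] at hst
  exact congrArg _ (Multiset.map_injective hf.injective hst)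

lemma Nat.injective_multiset_prod_map_nth_prime :
    Injective fun s : Multiset ℕ => (s.map (Nat.nth Nat.Prime)).prod := by
  intro s t hst
  have hprime : ∀ u : Multiset ℕ, ∀ p ∈ u.map (Nat.nth Nat.Prime), _root_.Prime p := by
    simp only [Multiset.mem_map]
    rintro u _ ⟨n, -, rfl⟩
    exact (Nat.prime_nth_prime n).prime
  have hfactors := congrArg UniqueFactorizationMonoid.normalizedFactors hst
  simp only [UniqueFactorizationMonoid.normalizedFactors_prod_of_prime (hprime _)] at hfactors
  exact Multiset.map_injective (Nat.nth_injective Nat.infinite_setOfPred_prime) hfactors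

lemma Real.injective_multiset_sum_map_log_nth_prime :
    Injective fun s : Multiset ℕ => (s.map fun n => Real.log (Nat.nth Nat.Prime n)).sum := by
  have hpos : ∀ s : Multiset ℕ, (0 : ℝ) < ((s.map (Nat.nth Nat.Prime)).prod : ℕ) := fun s =>
    Nat.cast_pos.2 (Multiset.prod_pos fun p hp => by
      obtain ⟨n, -, rfl⟩ := Multiset.mem_map.1 hp
      exact (Nat.prime_nth_prime n).pos)
  have hsum : ∀ s : Multiset ℕ, (s.map fun n => Real.log (Nat.nth Nat.Prime n)).sum
      = Real.log ((s.map (Nat.nth Nat.Prime)).prod : ℕ) := by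
    intro s
    rw [Nat.cast_multiset_prod, Real.log_multiset_prod, Multiset.map_map, Multiset.map_map]
    · rfl
    · simp only [Multiset.mem_map]
      rintro _ ⟨_, ⟨n, -, rfl⟩, rfl⟩
      exact_mod_cast (Nat.prime_nth_prime n).ne_zero
  intro s t hst
  apply Nat.injective_multiset_prod_map_nth_prime
  exact_mod_cast Real.log_injOn_pos (hpos s) (hpos t) (by simpa only [hsum] using hst)

lemma exists_perm_comp_eq_of_multiset_map_eq {α : Type*} {m : ℕ} {x y : Fin m → α}
    (hxy : Finset.univ.val.map x = Finset.univ.val.map y) :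
    ∃ σ : Equiv.Perm (Fin m), y ∘ σ = x := by
  classical
  have hcard : ∀ a, Fintype.card {i // x i = a} = Fintype.card {i // y i = a} := by
    intro a
    have hc := congrArg (Multiset.count a) hxy
    rw [Multiset.count_map, Multiset.count_map] at hc
    simp only [Fintype.card_subtype, Finset.card, Finset.filter_val]
    simpa [eq_comm] using hc
  exact ⟨Equiv.ofFiberEquiv (fun a => Fintype.equivOfCardEq (hcard a)),
    funext fun i => Equiv.ofFiberEquiv_map _ i⟩

theorem exists_eq_comp_sum_of_injOn_multiset_sum {α β γ : Type*} [AddCommMonoid β] [Nonempty γ]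
    {m : ℕ} {S : Set α} {φ : α → β}
    (hφ : {s : Multiset α | ∀ a ∈ s, a ∈ S}.InjOn fun s => (s.map φ).sum)
    {h : (Fin m → α) → γ}
    (hinv : ∀ (σ : Equiv.Perm (Fin m)) (x : Fin m → α), (∀ i, x i ∈ S) → h (x ∘ σ) = h x) :
    ∃ ρ : β → γ, ∀ x : Fin m → α, (∀ i, x i ∈ S) → h x = ρ (∑ k, φ (x k)) := by
  let encode : {x : Fin m → α // ∀ i, x i ∈ S} → β := fun x => ∑ k, φ (x.1 k)
  have hfactors : (fun x => h x.1).FactorsThrough encode := by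
    rintro ⟨x, hx⟩ ⟨y, hy⟩ hxy
    have hmem : ∀ z : Fin m → α, (∀ i, z i ∈ S) → ∀ a ∈ Finset.univ.val.map z, a ∈ S := by
      intro z hz a ha
      obtain ⟨i, -, rfl⟩ := Multiset.mem_map.1 ha
      exact hz i
    have hval : Finset.univ.val.map x = Finset.univ.val.map y :=
      hφ (hmem x hx) (hmem y hy) (by simpa only [Multiset.map_map, comp_def, Finset.sum_map_val] using hxy)
    obtain ⟨σ, rfl⟩ := exists_perm_comp_eq_of_multiset_map_eq hval
    exact hinv σ y hy
  refine ⟨extend encode (fun x => h x.1) fun _ => Classical.arbitrary γ, fun x hx => ?_⟩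
  exact (hfactors.extend_apply _ ⟨x, hx⟩).symm

theorem deep_sets_representation_general (d m : ℕ)
    (𝒳 : Set (Fin d → ℝ)) (h𝒳 : 𝒳.Countable)
    (h : (Fin m → (Fin d → ℝ)) → ℝ)
    (hinv : ∀ (σ : Equiv.Perm (Fin m)) (x : Fin m → (Fin d → ℝ)),
      (∀ i, x i ∈ 𝒳) → h (x ∘ σ) = h x) :
    ∃ (M : ℕ) (ψ : (Fin d → ℝ) → (Fin M → ℝ)) (ρ : (Fin M → ℝ) → ℝ),
      ∀ x : Fin m → (Fin d → ℝ), (∀ i, x i ∈ 𝒳) →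
        h x = ρ (∑ k, ψ (x k)) := by
  obtain ⟨e, he⟩ := Set.countable_iff_exists_injOn.1 h𝒳
  have hencode : {s : Multiset (Fin d → ℝ) | ∀ a ∈ s, a ∈ 𝒳}.InjOn
      fun s => (s.map fun x => Real.log (Nat.nth Nat.Prime (e x))).sum := by
    intro s hs t ht hst
    refine Multiset.injOn_map he hs ht (Real.injective_multiset_sum_map_log_nth_prime ?_)
    simpa only [Multiset.map_map, comp_def] using hst
  obtain ⟨ρ, hρ⟩ := exists_eq_comp_sum_of_injOn_multiset_sum hencode hinv
  refine ⟨1, fun x _ => Real.log (Nat.nth Nat.Prime (e x)), fun v => ρ (v 0), fun x hx => ?_⟩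
  simpa only [Finset.sum_apply] using hρ x hx

/-- Deep Sets representation (Zaheer et al. 2017, Theorem 2): a permutation
invariant function `h` of `m` arguments ranging over a countable set `𝒳 ⊆ ℝ^d` has a
sum-decomposition `h(x₁,…,x_m) = ρ(∑ ψ(x_k))`. -/
theorem deep_sets_representation (d m : ℕ) (hd : 0 < d) (hm : 0 < m)
    (𝒳 : Set (Fin d → ℝ)) (h𝒳 : 𝒳.Countable)
    (h : (Fin m → (Fin d → ℝ)) → ℝ)
    (hinv : ∀ (σ : Equiv.Perm (Fin m)) (x : Fin m → (Fin d → ℝ)),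
      (∀ i, x i ∈ 𝒳) → h (x ∘ σ) = h x) :
    ∃ (M : ℕ) (ψ : (Fin d → ℝ) → (Fin M → ℝ)) (ρ : (Fin M → ℝ) → ℝ),
      ∀ x : Fin m → (Fin d → ℝ), (∀ i, x i ∈ 𝒳) →
        h x = ρ (∑ k, ψ (x k)) :=
  deep_sets_representation_general d m 𝒳 h𝒳 h hinv
end

section
/- Let f : ℝ^{d×n} → ℝ^d be orthogonal equivariant (f(QX) = Q f(X) for all orthogonal Q). If d > n, then for every X ∈ ℝ^{d×n} whose columns are linearly independent, f(X) = X c for a unique c ∈ ℝ^n; moreover this c is orthogonal invariant: if Y = QX for orthogonal Q, the coefficient vector for Y equals that for X. -/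
open Matrix

/-- For an orthogonal equivariant `f : ℝ^{d×n} → ℝ^d` with `d > n`, and `X` with
linearly independent columns, `f(X) = Xc` for a unique `c ∈ ℝⁿ`, and this
coefficient vector is orthogonal invariant. -/
theorem unique_invariant_coefficients (d n : ℕ) (hd : n < d) (hn : 0 < n)
    (f : Matrix (Fin d) (Fin n) ℝ → (Fin d → ℝ))
    (hf : ∀ (Q : Matrix (Fin d) (Fin d) ℝ) (X : Matrix (Fin d) (Fin n) ℝ),
      Qᵀ * Q = 1 → f (Q * X) = Q.mulVec (f X))
    (X : Matrix (Fin d) (Fin n) ℝ)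
    (hX : LinearIndependent ℝ (fun j : Fin n => (fun i : Fin d => X i j))) :
    (∃! c : Fin n → ℝ, f X = X.mulVec c) ∧
      ∀ (Q : Matrix (Fin d) (Fin d) ℝ), Qᵀ * Q = 1 →
        ∀ c : Fin n → ℝ, f X = X.mulVec c → f (Q * X) = (Q * X).mulVec c := by
  have hXinj : Function.Injective X.mulVec := by
    rw [Matrix.mulVec_injective_iff]
    exact hX
  set G : Matrix (Fin n) (Fin n) ℝ := Xᵀ * X with hG
  have hGinj : Function.Injective G.mulVec := by
    intro a b hab
    apply hXinj
    have h0 : G.mulVec (a - b) = 0 := by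
      have := sub_eq_zero.mpr hab
      rwa [← Matrix.mulVec_sub] at this
    have hdot : (X.mulVec (a - b)) ⬝ᵥ (X.mulVec (a - b)) = 0 := by
      have : (a - b) ⬝ᵥ G.mulVec (a - b) = 0 := by rw [h0]; simp
      rwa [hG, ← Matrix.mulVec_mulVec, Matrix.dotProduct_mulVec,
        Matrix.vecMul_transpose] at this
    have hz : X.mulVec (a - b) = 0 := by
      exact (dotProduct_self_eq_zero).mp hdot
    rw [Matrix.mulVec_sub, sub_eq_zero] at hz
    exact hz
  have hGu : IsUnit G := Matrix.mulVec_injective_iff_isUnit.mp hGinj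
  have hGdet : IsUnit G.det := (Matrix.isUnit_iff_isUnit_det G).mp hGu
  have hGinv : G⁻¹ * G = 1 := Matrix.nonsing_inv_mul G hGdet
  have hGinv' : G * G⁻¹ = 1 := Matrix.mul_nonsing_inv G hGdet
  set P : Matrix (Fin d) (Fin d) ℝ := X * G⁻¹ * Xᵀ with hP
  have hPX : P * X = X := by
    rw [hP, Matrix.mul_assoc, Matrix.mul_assoc, ← hG, hGinv, Matrix.mul_one]
  have hGsym : Gᵀ = G := by rw [hG, Matrix.transpose_mul, Matrix.transpose_transpose]
  have hPsym : Pᵀ = P := by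
    rw [hP, Matrix.transpose_mul, Matrix.transpose_mul, Matrix.transpose_transpose,
      Matrix.transpose_nonsing_inv, hGsym, Matrix.mul_assoc]
  have hPP : P * P = P := by
    rw [hP]
    calc X * G⁻¹ * Xᵀ * (X * G⁻¹ * Xᵀ)
        = X * G⁻¹ * (Xᵀ * X) * G⁻¹ * Xᵀ := by
          simp only [Matrix.mul_assoc]
      _ = X * G⁻¹ * Xᵀ := by
          rw [← hG, Matrix.mul_assoc (X * G⁻¹) G G⁻¹, hGinv', Matrix.mul_one]
  set Q : Matrix (Fin d) (Fin d) ℝ := P + P - 1 with hQdef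
  have hQsym : Qᵀ = Q := by rw [hQdef, Matrix.transpose_sub, Matrix.transpose_add, hPsym,
    Matrix.transpose_one]
  have hQorth : Qᵀ * Q = 1 := by
    rw [hQsym, hQdef]
    have : (P + P - 1) * (P + P - 1)
        = (P*P + P*P + (P*P + P*P)) - (P + P) - ((P + P) - 1) := by
      noncomm_ring
    rw [this, hPP]
    abel
  have hQX : Q * X = X := by
    rw [hQdef, Matrix.sub_mul, Matrix.add_mul, hPX, Matrix.one_mul]
    abel
  have key := hf Q X hQorth
  rw [hQX] at key
  have hPf : P.mulVec (f X) = f X := by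
    have h2 := key
    rw [hQdef, Matrix.sub_mulVec, Matrix.add_mulVec, Matrix.one_mulVec] at h2
    funext i
    have := congr_fun h2 i
    simp only [Pi.sub_apply, Pi.add_apply] at this
    linarith
  have hc : f X = X.mulVec ((G⁻¹ * Xᵀ).mulVec (f X)) := by
    conv_lhs => rw [← hPf]
    rw [hP, Matrix.mul_assoc, ← Matrix.mulVec_mulVec]
  constructor
  · refine ⟨(G⁻¹ * Xᵀ).mulVec (f X), hc, ?_⟩
    intro c hc'
    apply hXinj
    rw [← hc, ← hc']
  · intro Q' hQ' c hc'
    rw [hf Q' X hQ', hc', Matrix.mulVec_mulVec]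
end
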